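/- arXiv:2201.07777 — 2 statements merged into one kernel-verified Lean document; each statement's English description precedes it below -/
import Mathlib

section
/- Let d ≥ 4 be an integer and let G be a bipartite graph with partite sets U and W such that |U| > C(|W|, 3) (the number of 3-element subsets of W) and every vertex in U has at least d neighbours in W. Then G contains a copy of the 3-dimensional hypercube Q₃ as a subgraph. -/
/-!
`Q₃` is `K₄,₄` minus a perfect matching, so it suffices to find a `4`-set `T ⊆ W` together with
distinct vertices `u_S ∈ U`, one for each `3`-subset `S ⊆ T`, such that `S ⊆ N(u_S)`.
Fix a `4`-set `A u ⊆ N(u) ∩ W` for every `u ∈ U`, and call a `3`-subset `S` of `T` exclusive if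
every `u` with `S ⊆ A u` has `A u = T`. A vertex `u` with `A u ≠ T` contains at most one
`3`-subset of `T`, so the non-exclusive faces of `T` have distinct representatives outside the
fibre `{u | A u = T}`, and the exclusive ones can be represented inside the fibre as soon as it is
large enough. If this fails for every `T = A u`, each fibre is smaller than the set of exclusive
faces of `T`; these sets are disjoint for different `T`, whence `|U| ≤ C(|W|, 3)`.
-/

/-- The 3-dimensional hypercube graph `Q₃` on vertex set `{0,1}³`:
two vertices are adjacent iff they differ in exactly one coordinate. -/
def cubeQ3 : SimpleGraph (Fin 2 × Fin 2 × Fin 2) :=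
  SimpleGraph.fromRel (fun x y =>
    (x.1 ≠ y.1 ∧ x.2.1 = y.2.1 ∧ x.2.2 = y.2.2) ∨
    (x.1 = y.1 ∧ x.2.1 ≠ y.2.1 ∧ x.2.2 = y.2.2) ∨
    (x.1 = y.1 ∧ x.2.1 = y.2.1 ∧ x.2.2 ≠ y.2.2))

/-- `G` contains a copy of `Q₃` as a (not necessarily induced) subgraph. -/
def HasQ3Copy {V : Type*} (G : SimpleGraph V) : Prop :=
  ∃ f : (Fin 2 × Fin 2 × Fin 2) → V,
    Function.Injective f ∧ ∀ a b, cubeQ3.Adj a b → G.Adj (f a) (f b)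

open Finset

theorem Finset.union_eq_of_mem_powersetCard_of_ne {α : Type*} [DecidableEq α] {k : ℕ}
    {T S₁ S₂ : Finset α} (hT : #T = k + 1) (h₁ : S₁ ∈ T.powersetCard k)
    (h₂ : S₂ ∈ T.powersetCard k) (hne : S₁ ≠ S₂) : S₁ ∪ S₂ = T := by
  rw [mem_powersetCard] at h₁ h₂
  refine eq_of_subset_of_card_le (union_subset h₁.1 h₂.1) ?_
  by_contra! hlt
  have h₁' : S₁ = S₁ ∪ S₂ := eq_of_subset_of_card_le subset_union_left (by omega)
  have h₂' : S₂ = S₁ ∪ S₂ := eq_of_subset_of_card_le subset_union_right (by omega)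
  exact hne (h₁'.trans h₂'.symm)

section FaceRepresentatives

variable {ι α : Type*} [DecidableEq α] (s : Finset ι) (A : ι → Finset α) (k : ℕ)

def exclusiveFaces (T : Finset α) : Finset (Finset α) :=
  (T.powersetCard k).filter fun S => ∀ i ∈ s, S ⊆ A i → A i = T

variable {s A k}

theorem exists_faceEmbedding_of_card_exclusiveFaces_le {T : Finset α} (hT : #T = k + 1)
    (hA : ∀ i ∈ s, #(A i) = k + 1)
    (hcard : #(exclusiveFaces s A k T) ≤ #(s.filter (A · = T))) :
    ∃ φ : T.powersetCard k ↪ ι, ∀ S, φ S ∈ s ∧ ↑S ⊆ A (φ S) := by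
  obtain ⟨e⟩ : Nonempty (exclusiveFaces s A k T ↪ s.filter (A · = T)) :=
    Function.Embedding.nonempty_of_card_le (by simpa using hcard)
  have he : ∀ S, (e S : ι) ∈ s ∧ A (e S) = T := fun S => mem_filter.mp (e S).2
  have hwit : ∀ S : T.powersetCard k, ↑S ∉ exclusiveFaces s A k T →
      ∃ i ∈ s, ↑S ⊆ A i ∧ A i ≠ T := by
    intro S hS
    simpa [exclusiveFaces, S.2] using hS
  choose wit hwits hwitA hwitT using hwit
  let φ : T.powersetCard k → ι := fun S =>
    if hS : ↑S ∈ exclusiveFaces s A k T then e ⟨S, hS⟩ else wit S hS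
  have hφ : ∀ S, φ S ∈ s ∧ ↑S ⊆ A (φ S) := by
    intro S
    by_cases hx : ↑S ∈ exclusiveFaces s A k T
    · simp only [φ, dif_pos hx]
      exact ⟨(he _).1, (he _).2.symm ▸ (mem_powersetCard.mp S.2).1⟩
    · simp only [φ, dif_neg hx]
      exact ⟨hwits S hx, hwitA S hx⟩
  refine ⟨⟨φ, fun S₁ S₂ h => ?_⟩, hφ⟩
  by_contra hne
  by_cases x₁ : ↑S₁ ∈ exclusiveFaces s A k T <;> by_cases x₂ : ↑S₂ ∈ exclusiveFaces s A k T <;>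
    simp only [φ, x₁, x₂, dif_pos, dif_neg, not_false_eq_true] at h
  · exact hne (Subtype.ext (by simpa using e.injective (Subtype.ext h)))
  · exact hwitT S₂ x₂ (h ▸ (he _).2)
  · exact hwitT S₁ x₁ (h ▸ (he _).2)
  · refine hwitT S₂ x₂ (eq_of_subset_of_card_le ?_ (by rw [hT, hA _ (hwits S₂ x₂)])).symm
    rw [← union_eq_of_mem_powersetCard_of_ne hT S₁.2 S₂.2 (Subtype.coe_ne_coe.mpr hne)]
    exact union_subset (h ▸ hwitA S₁ x₁) (hwitA S₂ x₂)

theorem pairwiseDisjoint_exclusiveFaces :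
    (s.image A : Set (Finset α)).PairwiseDisjoint (exclusiveFaces s A k) := by
  intro T₁ hT₁ T₂ _ hne
  obtain ⟨i, hi, rfl⟩ := mem_image.mp hT₁
  refine disjoint_left.mpr fun S hS₁ hS₂ => hne ?_
  exact (mem_filter.mp hS₂).2 i hi (mem_powersetCard.mp (mem_filter.mp hS₁).1).1

theorem exists_faceEmbedding_of_choose_lt {W : Finset α} (hA : ∀ i ∈ s, #(A i) = k + 1)
    (hAW : ∀ i ∈ s, A i ⊆ W) (hs : (#W).choose k < #s) :
    ∃ i ∈ s, ∃ φ : (A i).powersetCard k ↪ ι, ∀ S, φ S ∈ s ∧ ↑S ⊆ A (φ S) := by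
  by_contra hnone
  have hfiber : ∀ T ∈ s.image A, #(s.filter (A · = T)) ≤ #(exclusiveFaces s A k T) := by
    intro T hT
    obtain ⟨i, hi, rfl⟩ := mem_image.mp hT
    by_contra! hlt
    exact hnone ⟨i, hi, exists_faceEmbedding_of_card_exclusiveFaces_le (hA i hi) hA hlt.le⟩
  have hsub : (s.image A).biUnion (exclusiveFaces s A k) ⊆ W.powersetCard k := by
    intro S hS
    obtain ⟨T, hT, hST⟩ := mem_biUnion.mp hS
    obtain ⟨i, hi, rfl⟩ := mem_image.mp hT
    obtain ⟨hSA, hScard⟩ := mem_powersetCard.mp (mem_filter.mp hST).1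
    exact mem_powersetCard.mpr ⟨hSA.trans (hAW i hi), hScard⟩
  refine hs.not_ge ?_
  calc #s = ∑ T ∈ s.image A, #(s.filter (A · = T)) :=
        card_eq_sum_card_fiberwise fun i hi => mem_image_of_mem A hi
    _ ≤ ∑ T ∈ s.image A, #(exclusiveFaces s A k T) := sum_le_sum hfiber
    _ = #((s.image A).biUnion (exclusiveFaces s A k)) :=
        (card_biUnion pairwiseDisjoint_exclusiveFaces).symm
    _ ≤ #(W.powersetCard k) := card_le_card hsub
    _ = (#W).choose k := card_powersetCard k W

end FaceRepresentatives

theorem hasQ3Copy_of_crown {V : Type*} {G : SimpleGraph V} (u w : Fin 4 → V)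
    (hu : Function.Injective u) (hw : Function.Injective w) (huw : ∀ i, u i ≠ w i)
    (hadj : ∀ i j, i ≠ j → G.Adj (u i) (w j)) : HasQ3Copy G := by
  have hne : ∀ i j, u i ≠ w j := fun i j =>
    if h : i = j then h ▸ huw i else (hadj i j h).ne
  -- `u` sits on the even vertices and `w i` on the antipode of `u i`: distinct even vertices
  -- differ in two coordinates, so each is adjacent to the antipode of the other.
  refine ⟨fun x => ![![![u 0, w 3], ![w 2, u 1]], ![![w 1, u 2], ![u 3, w 0]]] x.1 x.2.1 x.2.2,
    ?_, ?_⟩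
  · intro a b hab
    fin_cases a <;> fin_cases b <;> simp_all [hu.eq_iff, hw.eq_iff, (hne _ _).symm]
  · intro a b hab
    fin_cases a <;> fin_cases b <;> simp_all [cubeQ3] <;> first
      | exact hadj _ _ (by decide) | exact (hadj _ _ (by decide)).symm

theorem hasQ3Copy_of_faceEmbedding {V : Type*} [DecidableEq V] {G : SimpleGraph V}
    {T : Finset V} (hT : #T = 4) (φ : T.powersetCard 3 ↪ V) (hφT : ∀ S, φ S ∉ T)
    (hadj : ∀ S : T.powersetCard 3, ∀ w ∈ (S : Finset V), G.Adj (φ S) w) : HasQ3Copy G := by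
  let w : Fin 4 ≃ T := (T.equivFinOfCardEq hT).symm
  have hface : ∀ i, T.erase (w i) ∈ T.powersetCard 3 := fun i =>
    mem_powersetCard.mpr ⟨erase_subset _ _, by rw [card_erase_of_mem (w i).2, hT]⟩
  refine hasQ3Copy_of_crown (fun i => φ ⟨T.erase (w i), hface i⟩) (fun i => w i) ?_ ?_ ?_ ?_
  · intro i j h
    have := erase_injOn T (w i).2 (w j).2 (congrArg Subtype.val (φ.injective h))
    exact w.injective (Subtype.ext this)
  · exact Subtype.val_injective.comp w.injective
  · exact fun i h => hφT _ (h ▸ (w i).2)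
  · intro i j hij
    exact hadj _ _ (mem_erase.mpr ⟨fun h => hij (w.injective (Subtype.ext h)).symm, (w j).2⟩)

theorem stmt0_general {V : Type*} [Fintype V] [DecidableEq V]
    (G : SimpleGraph V) [DecidableRel G.Adj] (U W : Finset V)
    (hdisj : Disjoint U W)
    (d : ℕ) (hd : 4 ≤ d)
    (hU : W.card.choose 3 < U.card)
    (hdeg : ∀ u ∈ U, d ≤ (G.neighborFinset u ∩ W).card) :
    HasQ3Copy G := by
  have hnbhd : ∀ u ∈ U, ∃ B ⊆ G.neighborFinset u ∩ W, #B = 3 + 1 := fun u hu =>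
    exists_subset_card_eq (hd.trans (hdeg u hu))
  choose! A hAN hAcard using hnbhd
  have hAW : ∀ u ∈ U, A u ⊆ W := fun u hu => (hAN u hu).trans inter_subset_right
  obtain ⟨i, hi, φ, hφ⟩ := exists_faceEmbedding_of_choose_lt hAcard hAW hU
  refine hasQ3Copy_of_faceEmbedding (hAcard i hi) φ (fun S hS => ?_) (fun S w hw => ?_)
  · exact disjoint_left.mp hdisj (hφ S).1 (hAW i hi hS)
  · exact (G.mem_neighborFinset _ _).mp (mem_inter.mp (hAN _ (hφ S).1 ((hφ S).2 hw))).1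

/-- if `G` is bipartite with parts `U`, `W`, every vertex of `U`
has at least `d ≥ 4` neighbours in `W`, and `|U| > C(|W|,3)`, then `G ⊇ Q₃`. -/
theorem stmt0 {V : Type*} [Fintype V] [DecidableEq V]
    (G : SimpleGraph V) [DecidableRel G.Adj] (U W : Finset V)
    (hdisj : Disjoint U W)
    (hbip : ∀ u v : V, G.Adj u v → (u ∈ U ∧ v ∈ W) ∨ (u ∈ W ∧ v ∈ U))
    (d : ℕ) (hd : 4 ≤ d)
    (hU : W.card.choose 3 < U.card)
    (hdeg : ∀ u ∈ U, d ≤ (G.neighborFinset u ∩ W).card) :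
    HasQ3Copy G :=
  stmt0_general G U W hdisj d hd hU hdeg
end

section
/- Let G be a graph and U ⊆ V(G) a set of vertices such that the set U₀ = {v ∈ V(G) \ U : v has at least 4 neighbours in U} satisfies |U₀| > C(|U|, 3). Then G contains a copy of the 3-dimensional hypercube Q₃ as a subgraph. -/
open Finset

def cubeParity (p : Fin 2 × Fin 2 × Fin 2) : Fin 2 := p.1 + p.2.1 + p.2.2

def cubeAntipodalClass (p : Fin 2 × Fin 2 × Fin 2) : Fin 2 × Fin 2 :=
  (p.1 + p.2.2, p.2.1 + p.2.2)

lemma cubeQ3_adj_iff (p q : Fin 2 × Fin 2 × Fin 2) :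
    cubeQ3.Adj p q ↔
      cubeParity p ≠ cubeParity q ∧ cubeAntipodalClass p ≠ cubeAntipodalClass q := by
  simp only [cubeQ3, SimpleGraph.fromRel_adj]
  revert p q
  decide

lemma eq_of_cubeParity_eq_of_cubeAntipodalClass_eq {p q : Fin 2 × Fin 2 × Fin 2}
    (h₁ : cubeParity p = cubeParity q) (h₂ : cubeAntipodalClass p = cubeAntipodalClass q) :
    p = q := by
  revert p q
  decide

section Crown

variable {V : Type*} (G : SimpleGraph V)

lemma hasQ3Copy_of_crown_fin (f w : Fin 2 × Fin 2 → V) (hf : Function.Injective f)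
    (hw : Function.Injective w) (hfw : ∀ i j, f i ≠ w j)
    (hadj : ∀ i j, i ≠ j → G.Adj (w i) (f j)) : HasQ3Copy G := by
  let φ p := if cubeParity p = 0 then f (cubeAntipodalClass p) else w (cubeAntipodalClass p)
  refine ⟨φ, fun p q hpq => ?_, fun p q hpq => ?_⟩
  · simp only [φ] at hpq
    split_ifs at hpq with hp hq hq
    · exact eq_of_cubeParity_eq_of_cubeAntipodalClass_eq (hp.trans hq.symm) (hf hpq)
    · exact absurd hpq (hfw _ _)
    · exact absurd hpq.symm (hfw _ _)
    · exact eq_of_cubeParity_eq_of_cubeAntipodalClass_eq (by omega) (hw hpq)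
  · obtain ⟨hpar, hcls⟩ := (cubeQ3_adj_iff p q).mp hpq
    simp only [φ]
    split_ifs with hp hq hq
    · exact absurd (hp.trans hq.symm) hpar
    · exact (hadj _ _ (Ne.symm hcls)).symm
    · exact hadj _ _ hcls
    · omega

lemma hasQ3Copy_of_crown_s1 {S : Finset V} (hS : #S = 4) (w : S → V) (hw : Function.Injective w)
    (hwS : ∀ x, w x ∉ S) (hadj : ∀ x y : S, x ≠ y → G.Adj (w x) y) : HasQ3Copy G := by
  obtain ⟨e⟩ : Nonempty (Fin 2 × Fin 2 ≃ S) := Fintype.card_eq.mp (by simp [hS])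
  refine hasQ3Copy_of_crown_fin G (fun i => e i) (fun i => w (e i))
    (Subtype.val_injective.comp e.injective) (hw.comp e.injective)
    (fun i j h => hwS (e j) (h ▸ (e i).2)) (fun i j hij => hadj _ _ (e.injective.ne hij))

end Crown

section MinimalViolator

variable {α β : Type*} [DecidableEq α] [DecidableEq β] (t : α → Finset β)

lemma card_le_card_biUnion_filter_of_minimal {W : Finset α}
    (hW : Minimal (fun W => #(W.biUnion t) < #W) W) (F : Finset {T // T ∈ W.biUnion t}) :
    #F ≤ #(F.biUnion fun T => W.filter (T.1 ∈ t ·)) := by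
  -- Otherwise deleting the neighbourhood `D` of `F` from `W` leaves a smaller violator.
  by_contra! hF
  set D := F.biUnion fun T => W.filter (T.1 ∈ t ·)
  have hDW : D ⊆ W := biUnion_subset.2 fun _ _ => filter_subset _ _
  obtain ⟨T, hT⟩ : F.Nonempty := card_pos.1 (by omega)
  obtain ⟨v, hvW, hvT⟩ := mem_biUnion.1 T.2
  have hvD : v ∈ D := mem_biUnion.2 ⟨T, hT, mem_filter.2 ⟨hvW, hvT⟩⟩
  have hsub : (W \ D).biUnion t ⊆ W.biUnion t \ F.map (Function.Embedding.subtype _) := by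
    intro T' hT'
    obtain ⟨u, hu, hT'u⟩ := mem_biUnion.1 hT'
    refine mem_sdiff.2 ⟨mem_biUnion.2 ⟨u, sdiff_subset hu, hT'u⟩, fun hT'F => ?_⟩
    obtain ⟨T'', hT''F, rfl⟩ := mem_map.1 hT'F
    exact (mem_sdiff.1 hu).2 (mem_biUnion.2 ⟨T'', hT''F, mem_filter.2 ⟨sdiff_subset hu, hT'u⟩⟩)
  have hD : #((W \ D).biUnion t) < #(W \ D) := by
    have hFB : F.map (Function.Embedding.subtype _) ⊆ W.biUnion t := fun _ hT' => by
      obtain ⟨T', _, rfl⟩ := mem_map.1 hT'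
      exact T'.2
    have hFcard := card_le_card hFB
    have hcard := card_le_card hsub
    rw [card_map] at hFcard
    rw [card_sdiff_of_subset hFB, card_map] at hcard
    have hWviol : #(W.biUnion t) < #W := hW.1
    rw [card_sdiff_of_subset hDW]
    omega
  exact (mem_sdiff.1 (hW.2 hD sdiff_subset hvW)).2 hvD

lemma exists_nonempty_subset_injective_of_card_biUnion_lt {W : Finset α}
    (h : #(W.biUnion t) < #W) :
    ∃ W' ⊆ W, W'.Nonempty ∧ ∃ g : {T // T ∈ W'.biUnion t} → α,
      Function.Injective g ∧ ∀ T, g T ∈ W' ∧ T.1 ∈ t (g T) := by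
  obtain ⟨W', hW'W, hW'⟩ :=
    exists_minimal_le_of_wellFoundedLT (fun W => #(W.biUnion t) < #W) W h
  obtain ⟨g, hg, hgt⟩ := (all_card_le_biUnion_card_iff_exists_injective _).1
    (card_le_card_biUnion_filter_of_minimal t hW')
  exact ⟨W', hW'W, card_pos.1 (by have := hW'.1; omega), g, hg, fun T => mem_filter.1 (hgt T)⟩

end MinimalViolator

section NeighborTriples

variable {V : Type*} [Fintype V] [DecidableEq V] (G : SimpleGraph V) [DecidableRel G.Adj]
  (U : Finset V)

def neighborTriples (v : V) : Finset (Finset V) := (G.neighborFinset v ∩ U).powersetCard 3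

lemma hasQ3Copy_of_card_biUnion_neighborTriples_lt {W : Finset V}
    (hW : ∀ v ∈ W, v ∉ U ∧ 4 ≤ #(G.neighborFinset v ∩ U))
    (h : #(W.biUnion (neighborTriples G U)) < #W) : HasQ3Copy G := by
  obtain ⟨W', hW'W, ⟨v, hv⟩, g, hg, hgt⟩ :=
    exists_nonempty_subset_injective_of_card_biUnion_lt (neighborTriples G U) h
  obtain ⟨S, hSN, hS⟩ := exists_subset_card_eq (hW v (hW'W hv)).2
  have herase (x : S) : S.erase x ∈ W'.biUnion (neighborTriples G U) :=
    mem_biUnion.2 ⟨v, hv, mem_powersetCard.2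
      ⟨(erase_subset _ S).trans hSN, by rw [card_erase_of_mem x.2, hS]⟩⟩
  refine hasQ3Copy_of_crown_s1 G hS (fun x => g ⟨S.erase x, herase x⟩)
    (fun x y hxy =>
      Subtype.val_injective (S.erase_injOn x.2 y.2 (congrArg Subtype.val (hg hxy))))
    (fun x hx => (hW _ (hW'W (hgt _).1)).1 (inter_subset_right (hSN hx)))
    (fun x y hxy => ?_)
  have hy : (y : V) ∈ S.erase x := mem_erase.2 ⟨Subtype.val_injective.ne hxy.symm, y.2⟩
  exact (G.mem_neighborFinset _ _).1 (mem_inter.1 ((mem_powersetCard.1 (hgt _).2).1 hy)).1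

end NeighborTriples

/-- if the set `U₀` of vertices outside `U` with at least `4`
neighbours in `U` satisfies `|U₀| > C(|U|,3)`, then `G` contains `Q₃`. -/
theorem stmt1 {V : Type*} [Fintype V] [DecidableEq V]
    (G : SimpleGraph V) [DecidableRel G.Adj] (U : Finset V)
    (hU0 : U.card.choose 3 <
      (Finset.univ.filter
        (fun v => v ∉ U ∧ 4 ≤ (G.neighborFinset v ∩ U).card)).card) :
    HasQ3Copy G := by
  refine hasQ3Copy_of_card_biUnion_neighborTriples_lt G U (fun v hv => (mem_filter.1 hv).2)
    (lt_of_le_of_lt ?_ hU0)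
  calc _ ≤ #(U.powersetCard 3) :=
        card_le_card (biUnion_subset.2 fun _ _ => powersetCard_mono inter_subset_right)
    _ = _ := card_powersetCard 3 U
end
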